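/- arXiv:1811.11023 — 6 statements merged into one kernel-verified Lean document; each statement's English description precedes it below -/
import Mathlib

section
/- Let P be a finite chordal polynomial set in K[x_1,...,x_n] such that x_1 < ... < x_n is a perfect elimination ordering of G(P). Suppose that for each index i with P^(i) ≠ ∅ a nonconstant polynomial T_i is given with lv(T_i) = x_i and supp(T_i) ⊆ supp(P^(i)). Then the list T of the polynomials T_i, ordered by increasing index i, is a triangular set and G(T) ⊆ G(P). Moreover, if supp(T_i) = supp(P^(i)) for every i with P^(i) ≠ ∅, then G(T) = G(P). -/
open MvPolynomial

variable {K : Type*} [Field K] {n : ℕ}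

/-- The set of variables effectively appearing in a polynomial. -/
def psupp (F : MvPolynomial (Fin n) K) : Set (Fin n) := ↑F.vars

/-- The set of variables appearing in a set of polynomials. -/
def ssupp (P : Set (MvPolynomial (Fin n) K)) : Set (Fin n) :=
  ⋃ F ∈ P, psupp F

/-- Adjacency in the associated graph `G(P)`: `p ≠ q` and some polynomial of `P`
contains both variables. -/
def adjG (P : Set (MvPolynomial (Fin n) K)) (p q : Fin n) : Prop :=
  p ≠ q ∧ ∃ F ∈ P, p ∈ psupp F ∧ q ∈ psupp F

/-- `G(P) ⊆ G(Q)`: every edge of `G(P)` is an edge of `G(Q)`. -/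
def subG (P Q : Set (MvPolynomial (Fin n) K)) : Prop :=
  ∀ p q, adjG P p q → adjG Q p q

/-- The natural ordering `x_1 < ... < x_n` of the variables is a perfect elimination
ordering of `G(P)`; in particular `G(P)` is chordal. -/
def isPEO (P : Set (MvPolynomial (Fin n) K)) : Prop :=
  ∀ p q k : Fin n, p < k → q < k → p ≠ q → adjG P p k → adjG P q k → adjG P p q

/-- `F` is nonconstant with leading variable `x_k`. -/
def hasLv (F : MvPolynomial (Fin n) K) (k : Fin n) : Prop :=
  k ∈ psupp F ∧ ∀ j ∈ psupp F, j ≤ k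

/-- `P^(k)`: the polynomials of `P` with leading variable `x_k`. -/
def levelSet (P : Set (MvPolynomial (Fin n) K)) (k : Fin n) :
    Set (MvPolynomial (Fin n) K) :=
  {F | F ∈ P ∧ hasLv F k}

/-- A triangular set: a list of nonconstant polynomials with strictly increasing
leading variables. -/
def IsTriangularSet (L : List (MvPolynomial (Fin n) K)) : Prop :=
  (∀ F ∈ L, (psupp F).Nonempty) ∧
    L.Chain' fun F G => ∃ a b, hasLv F a ∧ hasLv G b ∧ a < b

open Classical in
/-- The list of the chosen polynomials `T i`, for those `i` with `P^(i) ≠ ∅`,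
ordered by increasing index `i`. -/
noncomputable def triList (P : Set (MvPolynomial (Fin n) K))
    (T : Fin n → MvPolynomial (Fin n) K) : List (MvPolynomial (Fin n) K) :=
  ((Finset.univ.filter fun i => (levelSet P i).Nonempty).sort (· ≤ ·)).map T

/-! Every variable of `supp(P^(i))` other than `x_i` is adjacent to `x_i` in `G(P)`, so the
variables of `supp(P^(i))` below `x_i` are earlier neighbours of `x_i`; the perfect elimination
ordering makes them, together with `x_i`, a clique of `G(P)`. Hence `supp(T_i) ⊆ supp(P^(i))`
gives `G(T) ⊆ G(P)`. Conversely, every edge of `G(P)` lies in the support of some `F ∈ P^(i)`,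
with `x_i = lv(F)`, and so in `supp(T_i)` when equality holds. -/

namespace ChordalTriangular

theorem adjG_comm {P : Set (MvPolynomial (Fin n) K)} {p q : Fin n} :
    adjG P p q ↔ adjG P q p :=
  ⟨fun ⟨hpq, F, hF, hp, hq⟩ => ⟨hpq.symm, F, hF, hq, hp⟩,
    fun ⟨hqp, F, hF, hq, hp⟩ => ⟨hqp.symm, F, hF, hp, hq⟩⟩

theorem le_of_mem_ssupp_levelSet {P : Set (MvPolynomial (Fin n) K)} {i p : Fin n}
    (hp : p ∈ ssupp (levelSet P i)) : p ≤ i := by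
  obtain ⟨F, ⟨-, -, hFle⟩, hpF⟩ := Set.mem_iUnion₂.mp hp
  exact hFle p hpF

theorem adjG_of_mem_ssupp_levelSet {P : Set (MvPolynomial (Fin n) K)} {i p : Fin n}
    (hp : p ∈ ssupp (levelSet P i)) (hpi : p ≠ i) : adjG P p i := by
  obtain ⟨F, ⟨hF, hiF, -⟩, hpF⟩ := Set.mem_iUnion₂.mp hp
  exact ⟨hpi, F, hF, hpF, hiF⟩

theorem adjG_of_mem_ssupp_levelSet_of_isPEO {P : Set (MvPolynomial (Fin n) K)} (hpeo : isPEO P)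
    {i p q : Fin n} (hp : p ∈ ssupp (levelSet P i)) (hq : q ∈ ssupp (levelSet P i))
    (hpq : p ≠ q) : adjG P p q := by
  rcases (le_of_mem_ssupp_levelSet hp).eq_or_lt with rfl | hpi
  · exact adjG_comm.mp (adjG_of_mem_ssupp_levelSet hq hpq.symm)
  rcases (le_of_mem_ssupp_levelSet hq).eq_or_lt with rfl | hqi
  · exact adjG_of_mem_ssupp_levelSet hp hpq
  exact hpeo p q i hpi hqi hpq (adjG_of_mem_ssupp_levelSet hp hpi.ne)
    (adjG_of_mem_ssupp_levelSet hq hqi.ne)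

theorem mem_levelSet_max' {P : Set (MvPolynomial (Fin n) K)} {F : MvPolynomial (Fin n) K}
    (hF : F ∈ P) (hne : F.vars.Nonempty) : F ∈ levelSet P (F.vars.max' hne) :=
  ⟨hF, F.vars.max'_mem hne, fun j hj => F.vars.le_max' j hj⟩

theorem mem_triList_iff {P : Set (MvPolynomial (Fin n) K)} {T : Fin n → MvPolynomial (Fin n) K}
    {F : MvPolynomial (Fin n) K} :
    F ∈ triList P T ↔ ∃ i, (levelSet P i).Nonempty ∧ T i = F := by
  classical
  simp [triList]

theorem isTriangularSet_triList {P : Set (MvPolynomial (Fin n) K)}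
    {T : Fin n → MvPolynomial (Fin n) K}
    (hlv : ∀ i, (levelSet P i).Nonempty → hasLv (T i) i) :
    IsTriangularSet (triList P T) := by
  classical
  refine ⟨fun F hF => ?_, ?_⟩
  · obtain ⟨i, hi, rfl⟩ := mem_triList_iff.mp hF
    exact ⟨i, (hlv i hi).1⟩
  · have hlv' : ∀ i ∈ (Finset.univ.filter fun i => (levelSet P i).Nonempty).sort (· ≤ ·),
        hasLv (T i) i := fun i hi => hlv i (by simpa using hi)
    exact (List.isChain_map T).mpr ((Finset.sortedLT_sort _).pairwise.imp_of_mem fun ha hb hab =>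
      ⟨_, _, hlv' _ ha, hlv' _ hb, hab⟩).isChain

theorem subG_triList {P : Set (MvPolynomial (Fin n) K)} (hpeo : isPEO P)
    {T : Fin n → MvPolynomial (Fin n) K}
    (hsupp : ∀ i, (levelSet P i).Nonempty → psupp (T i) ⊆ ssupp (levelSet P i)) :
    subG {F | F ∈ triList P T} P := by
  rintro p q ⟨hpq, F, hF, hp, hq⟩
  obtain ⟨i, hi, rfl⟩ := mem_triList_iff.mp hF
  exact adjG_of_mem_ssupp_levelSet_of_isPEO hpeo (hsupp i hi hp) (hsupp i hi hq) hpq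

theorem subG_of_psupp_eq_ssupp_levelSet {P : Set (MvPolynomial (Fin n) K)}
    {T : Fin n → MvPolynomial (Fin n) K}
    (heq : ∀ i, (levelSet P i).Nonempty → psupp (T i) = ssupp (levelSet P i)) :
    subG P {F | F ∈ triList P T} := by
  rintro p q ⟨hpq, F, hF, hp, hq⟩
  have hFi := mem_levelSet_max' hF ⟨p, hp⟩
  have hi : (levelSet P _).Nonempty := ⟨F, hFi⟩
  refine ⟨hpq, T _, mem_triList_iff.mpr ⟨_, hi, rfl⟩, ?_, ?_⟩ <;> rw [heq _ hi]
  exacts [Set.mem_biUnion hFi hp, Set.mem_biUnion hFi hq]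

end ChordalTriangular

open ChordalTriangular in
theorem statement0_general {K : Type*} [Field K] {n : ℕ}
    (P : Set (MvPolynomial (Fin n) K)) (hpeo : isPEO P)
    (T : Fin n → MvPolynomial (Fin n) K)
    (hlv : ∀ i, (levelSet P i).Nonempty → hasLv (T i) i)
    (hsupp : ∀ i, (levelSet P i).Nonempty → psupp (T i) ⊆ ssupp (levelSet P i)) :
    IsTriangularSet (triList P T) ∧
    subG {F | F ∈ triList P T} P ∧
    ((∀ i, (levelSet P i).Nonempty → psupp (T i) = ssupp (levelSet P i)) →
      ∀ p q, adjG {F | F ∈ triList P T} p q ↔ adjG P p q) :=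
  ⟨isTriangularSet_triList hlv, subG_triList hpeo hsupp, fun heq p q =>
    ⟨subG_triList hpeo hsupp p q, subG_of_psupp_eq_ssupp_levelSet heq p q⟩⟩

/-- for a finite chordal polynomial set `P` whose natural variable
ordering is a perfect elimination ordering, if `T i` is nonconstant with leading
variable `x_i` and `supp (T i) ⊆ supp (P^(i))` whenever `P^(i) ≠ ∅`, then the list
of the `T i` (ordered by increasing `i`) is a triangular set whose associated graph
is a subgraph of `G(P)`; and if moreover `supp (T i) = supp (P^(i))` for each such
`i`, the two associated graphs coincide. -/
theorem statement0 {K : Type*} [Field K] {n : ℕ}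
    (P : Set (MvPolynomial (Fin n) K)) (hfin : P.Finite) (hpeo : isPEO P)
    (T : Fin n → MvPolynomial (Fin n) K)
    (hlv : ∀ i, (levelSet P i).Nonempty → hasLv (T i) i)
    (hsupp : ∀ i, (levelSet P i).Nonempty → psupp (T i) ⊆ ssupp (levelSet P i)) :
    IsTriangularSet (triList P T) ∧
    subG {F | F ∈ triList P T} P ∧
    ((∀ i, (levelSet P i).Nonempty → psupp (T i) = ssupp (levelSet P i)) →
      ∀ p q, adjG {F | F ∈ triList P T} p q ↔ adjG P p q) :=
  statement0_general P hpeo T hlv hsupp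
end

section
/- Let P be a finite chordal polynomial set in K[x_1,...,x_n] with P^(n) ≠ ∅ such that x_1 < ... < x_n is a perfect elimination ordering of G(P). Let T be a polynomial with lv(T) = x_n and supp(T) ⊆ supp(P^(n)), and let R be a finite polynomial set with supp(R) ⊆ supp(P^(n)) \ {x_n}. Define P̃ = (P \ P^(n)) ∪ {T} ∪ R. Then G(P̃) ⊆ G(P). Moreover, if supp(T) = supp(P^(n)), then G(P̃) = G(P). -/
/-!
Every polynomial of `P^(n)` has leading variable `x_n`, so each variable of `supp(P^(n))` other
than `x_n` is adjacent to `x_n` in `G(P)`; as `x_n` comes last in the perfect elimination ordering,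
`supp(P^(n))` is a clique of `G(P)`. The new polynomials `T` and those of `R` only involve variables
of this clique, so they create no new edge. Conversely, if `supp T = supp(P^(n))`, then `T` alone
carries every edge contributed by the removed polynomials `P^(n)`.
-/

open MvPolynomial

variable {K : Type*} [Field K] {n : ℕ}

def IsCliqueG (P : Set (MvPolynomial (Fin n) K)) (S : Set (Fin n)) : Prop :=
  ∀ p ∈ S, ∀ q ∈ S, p ≠ q → adjG P p q

lemma psupp_subset_ssupp {P : Set (MvPolynomial (Fin n) K)} {F : MvPolynomial (Fin n) K}
    (hF : F ∈ P) : psupp F ⊆ ssupp P :=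
  Set.subset_biUnion_of_mem (u := fun F => psupp F) hF

lemma IsCliqueG.subset {P : Set (MvPolynomial (Fin n) K)} {S S' : Set (Fin n)}
    (hS : IsCliqueG P S) (h : S' ⊆ S) : IsCliqueG P S' :=
  fun p hp q hq hpq => hS p (h hp) q (h hq) hpq

lemma isCliqueG_ssupp_levelSet {P : Set (MvPolynomial (Fin n) K)} (hpeo : isPEO P) (k : Fin n) :
    IsCliqueG P (ssupp (levelSet P k)) := by
  intro p hp q hq hpq
  simp only [ssupp, Set.mem_iUnion] at hp hq
  obtain ⟨F, ⟨hFP, hFk, hFle⟩, hpF⟩ := hp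
  obtain ⟨G, ⟨hGP, hGk, hGle⟩, hqG⟩ := hq
  rcases eq_or_ne p k with rfl | hpk
  · exact ⟨hpq, G, hGP, hGk, hqG⟩
  rcases eq_or_ne q k with rfl | hqk
  · exact ⟨hpq, F, hFP, hpF, hFk⟩
  exact hpeo p q k ((hFle p hpF).lt_of_ne hpk) ((hGle q hqG).lt_of_ne hqk) hpq
    ⟨hpk, F, hFP, hpF, hFk⟩ ⟨hqk, G, hGP, hqG, hGk⟩

lemma subG_of_forall_mem_or_isCliqueG {P Q : Set (MvPolynomial (Fin n) K)}
    (h : ∀ F ∈ Q, F ∈ P ∨ IsCliqueG P (psupp F)) : subG Q P := by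
  rintro p q ⟨hpq, F, hFQ, hpF, hqF⟩
  rcases h F hFQ with hFP | hclique
  · exact ⟨hpq, F, hFP, hpF, hqF⟩
  · exact hclique p hpF q hqF hpq

lemma subG_of_forall_exists_psupp_subset {P Q : Set (MvPolynomial (Fin n) K)}
    (h : ∀ F ∈ P, ∃ G ∈ Q, psupp F ⊆ psupp G) : subG P Q := by
  rintro p q ⟨hpq, F, hFP, hpF, hqF⟩
  obtain ⟨G, hGQ, hFG⟩ := h F hFP
  exact ⟨hpq, G, hGQ, hFG hpF, hFG hqF⟩

theorem statement1_general {K : Type*} [Field K] {n : ℕ}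
    (P : Set (MvPolynomial (Fin (n + 1)) K)) (hpeo : isPEO P)
    (T : MvPolynomial (Fin (n + 1)) K)
    (hTsupp : psupp T ⊆ ssupp (levelSet P (Fin.last n)))
    (R : Set (MvPolynomial (Fin (n + 1)) K))
    (hRsupp : ssupp R ⊆ ssupp (levelSet P (Fin.last n)) \ {Fin.last n}) :
    subG ((P \ levelSet P (Fin.last n)) ∪ {T} ∪ R) P ∧
    (psupp T = ssupp (levelSet P (Fin.last n)) →
      ∀ p q, adjG ((P \ levelSet P (Fin.last n)) ∪ {T} ∪ R) p q ↔ adjG P p q) := by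
  have hclique := isCliqueG_ssupp_levelSet hpeo (Fin.last n)
  have hsub : subG ((P \ levelSet P (Fin.last n)) ∪ {T} ∪ R) P := by
    refine subG_of_forall_mem_or_isCliqueG ?_
    rintro F ((⟨hFP, -⟩ | rfl) | hFR)
    · exact Or.inl hFP
    · exact Or.inr (hclique.subset hTsupp)
    · exact Or.inr (hclique.subset ((psupp_subset_ssupp hFR).trans
        (hRsupp.trans Set.sdiff_subset)))
  refine ⟨hsub, fun hTeq p q => ⟨hsub p q, ?_⟩⟩
  refine subG_of_forall_exists_psupp_subset (fun F hFP => ?_) p q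
  by_cases hFn : F ∈ levelSet P (Fin.last n)
  · exact ⟨T, Or.inl (Or.inr rfl), hTeq ▸ psupp_subset_ssupp hFn⟩
  · exact ⟨F, Or.inl (Or.inl ⟨hFP, hFn⟩), subset_rfl⟩

/-- let `P` be a finite chordal polynomial set (in `n+1` variables,
with greatest variable `x_n = Fin.last n`) whose natural variable ordering is a
perfect elimination ordering and with `P^(n) ≠ ∅`.  If `T` is nonconstant with
leading variable `x_n` and `supp T ⊆ supp (P^(n))`, and `R` is a finite polynomial
set with `supp R ⊆ supp (P^(n)) \ {x_n}`, then for
`P̃ = (P \ P^(n)) ∪ {T} ∪ R` we have `G(P̃) ⊆ G(P)`; moreover if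
`supp T = supp (P^(n))` then `G(P̃) = G(P)`. -/
theorem statement1 {K : Type*} [Field K] {n : ℕ}
    (P : Set (MvPolynomial (Fin (n + 1)) K)) (hfin : P.Finite) (hpeo : isPEO P)
    (hne : (levelSet P (Fin.last n)).Nonempty)
    (T : MvPolynomial (Fin (n + 1)) K) (hT : hasLv T (Fin.last n))
    (hTsupp : psupp T ⊆ ssupp (levelSet P (Fin.last n)))
    (R : Set (MvPolynomial (Fin (n + 1)) K)) (hRfin : R.Finite)
    (hRsupp : ssupp R ⊆ ssupp (levelSet P (Fin.last n)) \ {Fin.last n}) :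
    subG ((P \ levelSet P (Fin.last n)) ∪ {T} ∪ R) P ∧
    (psupp T = ssupp (levelSet P (Fin.last n)) →
      ∀ p q, adjG ((P \ levelSet P (Fin.last n)) ∪ {T} ∪ R) p q ↔ adjG P p q) :=
  statement1_general P hpeo T hTsupp R hRsupp
end

section
/- Let P be a finite chordal polynomial set in K[x_1,...,x_n] such that x_1 < ... < x_n is a perfect elimination ordering of G(P). Suppose reduction steps red_n, ..., red_1 are performed successively on P, and that at each level i with red̄_{i+1}(P)^(i) ≠ ∅ the chosen polynomial T_i satisfies supp(T_i) = supp(red̄_{i+1}(P)^(i)). Then G(red̄_1(P)) = G(P). -/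
open MvPolynomial

variable {K : Type*} [Field K] {n : ℕ}

/-- A reduction step at level `i` with chosen polynomial `T` and produced set `R`:
`T` is nonconstant with leading variable `x_i` and `supp T ⊆ supp (P^(i))`, `R` is a
finite set of polynomials with `supp R ⊆ supp (P^(i)) \ {x_i}`, and the result is
`(P \ P^(i)) ∪ {T} ∪ R`. -/
def RedStep (i : Fin n) (T : MvPolynomial (Fin n) K) (R : Set (MvPolynomial (Fin n) K))
    (P P' : Set (MvPolynomial (Fin n) K)) : Prop :=
  hasLv T i ∧ psupp T ⊆ ssupp (levelSet P i) ∧ R.Finite ∧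
    ssupp R ⊆ ssupp (levelSet P i) \ {i} ∧
    P' = (P \ levelSet P i) ∪ {T} ∪ R

/-- A reduction step at level `i` with arbitrary choices (identity if `P^(i) = ∅`). -/
def RedStepAny (i : Fin n) (P P' : Set (MvPolynomial (Fin n) K)) : Prop :=
  (levelSet P i = ∅ ∧ P' = P) ∨ ∃ T R, RedStep i T R P P'

/-!
Every polynomial of the level set `P^(i)` contains `x_i` and otherwise only smaller variables,
so `supp (P^(i))` consists of `x_i` and neighbours of `x_i` below it; since the ordering is a
perfect elimination ordering, this set is a clique of `G(P)`. Hence the new polynomials `T_i`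
and `R_i`, whose supports lie in that clique, create no new edges, while the edges of the removed
polynomials survive in `T_i` because `supp T_i = supp (P^(i))`. So each reduction step preserves
the graph, and with it the perfect elimination ordering, and the claim follows by induction.
-/

lemma adjG_symm {P : Set (MvPolynomial (Fin n) K)} {p q : Fin n} (h : adjG P p q) :
    adjG P q p := by
  obtain ⟨hpq, F, hF, hp, hq⟩ := h
  exact ⟨hpq.symm, F, hF, hq, hp⟩

lemma isPEO_of_adjG_iff {P Q : Set (MvPolynomial (Fin n) K)}
    (hQ : ∀ p q, adjG Q p q ↔ adjG P p q) (hpeo : isPEO P) : isPEO Q := by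
  intro p q k hpk hqk hpq hp hq
  exact (hQ p q).2 (hpeo p q k hpk hqk hpq ((hQ p k).1 hp) ((hQ q k).1 hq))

lemma le_and_adjG_of_mem_ssupp_levelSet {Q : Set (MvPolynomial (Fin n) K)} {i p : Fin n}
    (hp : p ∈ ssupp (levelSet Q i)) : p ≤ i ∧ (p ≠ i → adjG Q p i) := by
  simp only [ssupp, Set.mem_iUnion] at hp
  obtain ⟨F, ⟨hFQ, hFi, hFle⟩, hpF⟩ := hp
  exact ⟨hFle p hpF, fun hpi => ⟨hpi, F, hFQ, hpF, hFi⟩⟩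

lemma adjG_of_mem_ssupp_levelSet {Q : Set (MvPolynomial (Fin n) K)} (hpeo : isPEO Q)
    {i p q : Fin n} (hpq : p ≠ q) (hp : p ∈ ssupp (levelSet Q i))
    (hq : q ∈ ssupp (levelSet Q i)) : adjG Q p q := by
  obtain ⟨hpi, hpadj⟩ := le_and_adjG_of_mem_ssupp_levelSet hp
  obtain ⟨hqi, hqadj⟩ := le_and_adjG_of_mem_ssupp_levelSet hq
  rcases eq_or_ne p i with rfl | hpi'
  · exact adjG_symm (hqadj hpq.symm)
  rcases eq_or_ne q i with rfl | hqi'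
  · exact hpadj hpq
  exact hpeo p q i (hpi.lt_of_ne hpi') (hqi.lt_of_ne hqi') hpq (hpadj hpi') (hqadj hqi')

lemma RedStep.subG_left {Q Q' : Set (MvPolynomial (Fin n) K)} {i : Fin n}
    {T : MvPolynomial (Fin n) K} {R : Set (MvPolynomial (Fin n) K)}
    (hred : RedStep i T R Q Q') (hpeo : isPEO Q) : subG Q' Q := by
  obtain ⟨-, hTsub, -, hRsub, rfl⟩ := hred
  rintro p q ⟨hpq, F, hF, hpF, hqF⟩
  have hsupp : psupp F ⊆ ssupp (levelSet Q i) → adjG Q p q := fun h =>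
    adjG_of_mem_ssupp_levelSet hpeo hpq (h hpF) (h hqF)
  rcases hF with (⟨hFQ, -⟩ | rfl) | hFR
  · exact ⟨hpq, F, hFQ, hpF, hqF⟩
  · exact hsupp hTsub
  · exact hsupp fun x hx => (hRsub (psupp_subset_ssupp hFR hx)).1

lemma RedStep.subG_right {Q Q' : Set (MvPolynomial (Fin n) K)} {i : Fin n}
    {T : MvPolynomial (Fin n) K} {R : Set (MvPolynomial (Fin n) K)}
    (hred : RedStep i T R Q Q') (hT : ssupp (levelSet Q i) ⊆ psupp T) : subG Q Q' := by
  obtain ⟨-, -, -, -, rfl⟩ := hred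
  rintro p q ⟨hpq, F, hFQ, hpF, hqF⟩
  by_cases hlev : F ∈ levelSet Q i
  · have hFT := (psupp_subset_ssupp hlev).trans hT
    exact ⟨hpq, T, Or.inl (Or.inr rfl), hFT hpF, hFT hqF⟩
  · exact ⟨hpq, F, Or.inl (Or.inl ⟨hFQ, hlev⟩), hpF, hqF⟩

theorem statement2_general {K : Type*} [Field K] {n : ℕ}
    (P : Set (MvPolynomial (Fin n) K)) (hpeo : isPEO P)
    (S : ℕ → Set (MvPolynomial (Fin n) K))
    (T : ℕ → MvPolynomial (Fin n) K) (R : ℕ → Set (MvPolynomial (Fin n) K))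
    (hSn : S n = P)
    (hstep : ∀ i (h : i < n),
      (levelSet (S (i + 1)) ⟨i, h⟩ = ∅ ∧ S i = S (i + 1)) ∨
      (RedStep ⟨i, h⟩ (T i) (R i) (S (i + 1)) (S i) ∧
        psupp (T i) = ssupp (levelSet (S (i + 1)) ⟨i, h⟩))) :
    ∀ p q, adjG (S 0) p q ↔ adjG P p q := by
  refine Nat.decreasingInduction (motive := fun k _ => ∀ p q, adjG (S k) p q ↔ adjG P p q)
    (fun k hk ih => ?_) (by simp [hSn]) (Nat.zero_le n)
  rcases hstep k hk with ⟨-, heq⟩ | ⟨hred, hsupp⟩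
  · rwa [heq]
  have hpeo' : isPEO (S (k + 1)) := isPEO_of_adjG_iff ih hpeo
  intro p q
  rw [← ih p q]
  exact ⟨hred.subG_left hpeo' p q, hred.subG_right hsupp.ge p q⟩

/-- let `P` be a finite chordal polynomial set whose natural variable
ordering is a perfect elimination ordering, and perform reduction steps
`red_n, ..., red_1` successively on `P` (here `S n = P` and `S i = red_{i+1}(S (i+1))`
in the indexing of `Fin n`, so `S 0 = red̄_1(P)`).  If at each level with nonempty
level set the chosen polynomial `T i` satisfies
`supp (T i) = supp (red̄_{i+2}(P)^(i+1))`, then `G(red̄_1(P)) = G(P)`. -/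
theorem statement2 {K : Type*} [Field K] {n : ℕ}
    (P : Set (MvPolynomial (Fin n) K)) (hfin : P.Finite) (hpeo : isPEO P)
    (S : ℕ → Set (MvPolynomial (Fin n) K))
    (T : ℕ → MvPolynomial (Fin n) K) (R : ℕ → Set (MvPolynomial (Fin n) K))
    (hSn : S n = P)
    (hstep : ∀ i (h : i < n),
      (levelSet (S (i + 1)) ⟨i, h⟩ = ∅ ∧ S i = S (i + 1)) ∨
      (RedStep ⟨i, h⟩ (T i) (R i) (S (i + 1)) (S i) ∧
        psupp (T i) = ssupp (levelSet (S (i + 1)) ⟨i, h⟩))) :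
    ∀ p q, adjG (S 0) p q ↔ adjG P p q :=
  statement2_general P hpeo S T R hSn hstep
end

section
/- Let F be a finite chordal polynomial set in K[x_1,...,x_n] such that x_1 < ... < x_n is a perfect elimination ordering of G(F). If a pair (P, Q) of finite polynomial sets is obtained from the pair (F, ∅) by finitely many Wang steps and the nonzero elements of P are nonconstant with pairwise distinct leading variables, so that they form a triangular set T when ordered by leading variable, then G(T) ⊆ G(F). -/
open MvPolynomial

variable {K : Type*} [Field K] {n : ℕ}

/-- A Wang step: transform a pair `(P, Q)` of polynomial sets by choosing `k` with
`P^(k) ≠ ∅` and `T ∈ P^(k)`, and either (left branch) passing to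
`((P \ P^(k)) ∪ {T} ∪ R, Q ∪ {I})` for a finite set `R` with
`supp R ⊆ supp (P^(k))` and a polynomial `I` with `supp I ⊆ supp T`, or
(right branch) passing to `((P \ {T}) ∪ {I, R'}, Q)` for polynomials `I, R'` with
`supp I ⊆ supp T` and `supp R' ⊆ supp T`. -/
def WangStep (PQ PQ' :
    Set (MvPolynomial (Fin n) K) × Set (MvPolynomial (Fin n) K)) : Prop :=
  ∃ (k : Fin n) (T : MvPolynomial (Fin n) K), T ∈ levelSet PQ.1 k ∧
    ((∃ (R : Set (MvPolynomial (Fin n) K)) (I : MvPolynomial (Fin n) K),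
        R.Finite ∧ ssupp R ⊆ ssupp (levelSet PQ.1 k) ∧ psupp I ⊆ psupp T ∧
        PQ'.1 = (PQ.1 \ levelSet PQ.1 k) ∪ {T} ∪ R ∧ PQ'.2 = PQ.2 ∪ {I}) ∨
      (∃ I R' : MvPolynomial (Fin n) K, psupp I ⊆ psupp T ∧ psupp R' ⊆ psupp T ∧
        PQ'.1 = (PQ.1 \ {T}) ∪ {I, R'} ∧ PQ'.2 = PQ.2))

/-!
The invariant is `G(P) ⊆ G(F)`, i.e. the support of every polynomial of `P` is a clique of
`G(F)`. A right Wang step only adds polynomials supported inside the support of some `T ∈ P`.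
A left step adds polynomials supported inside `supp P^(k)`, which is again a clique: its variables
are at most `x_k`, each one below `x_k` is adjacent to `x_k`, and the perfect elimination ordering
joins any two of those. Finally, distinct leading variables let us list the nonzero polynomials
of `P` in increasing order of leading variable.
-/

lemma subG_iff_pairwise {P Q : Set (MvPolynomial (Fin n) K)} :
    subG P Q ↔ ∀ F ∈ P, (psupp F).Pairwise (adjG Q) := by
  constructor
  · exact fun h F hF p hp q hq hpq => h p q ⟨hpq, F, hF, hp, hq⟩
  · rintro h p q ⟨hpq, F, hF, hp, hq⟩
    exact h F hF hp hq hpq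

lemma subG_of_subset {P Q : Set (MvPolynomial (Fin n) K)} (h : P ⊆ Q) : subG P Q :=
  fun _ _ ⟨hpq, F, hF, hp, hq⟩ => ⟨hpq, F, h hF, hp, hq⟩

lemma subG.trans {P Q R : Set (MvPolynomial (Fin n) K)} (hPQ : subG P Q) (hQR : subG Q R) :
    subG P R :=
  fun p q h => hQR p q (hPQ p q h)

lemma pairwise_adjG_ssupp_levelSet {Fs P : Set (MvPolynomial (Fin n) K)} (hpeo : isPEO Fs)
    (hsub : subG P Fs) (k : Fin n) : (ssupp (levelSet P k)).Pairwise (adjG Fs) := by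
  rw [subG_iff_pairwise] at hsub
  intro p hp q hq hpq
  obtain ⟨F, ⟨hFP, hkF, hleF⟩, hpF⟩ := Set.mem_iUnion₂.1 hp
  obtain ⟨G, ⟨hGP, hkG, hleG⟩, hqG⟩ := Set.mem_iUnion₂.1 hq
  rcases (hleF p hpF).eq_or_lt with rfl | hpk
  · exact hsub G hGP hkG hqG hpq
  rcases (hleG q hqG).eq_or_lt with rfl | hqk
  · exact hsub F hFP hpF hkF hpq
  exact hpeo p q k hpk hqk hpq (hsub F hFP hpF hkF hpk.ne) (hsub G hGP hqG hkG hqk.ne)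

section WangStep

variable {PQ PQ' : Set (MvPolynomial (Fin n) K) × Set (MvPolynomial (Fin n) K)}

lemma WangStep.finite (h : WangStep PQ PQ') (hP : PQ.1.Finite) : PQ'.1.Finite := by
  obtain ⟨k, T, -, ⟨R, I, hR, -, -, hP', -⟩ | ⟨I, R', -, -, hP', -⟩⟩ := h
  · rw [hP']
    exact (hP.sdiff.union (Set.finite_singleton T)).union hR
  · rw [hP']
    exact hP.sdiff.union ((Set.finite_singleton R').insert I)

lemma WangStep.subG {Fs : Set (MvPolynomial (Fin n) K)} (hpeo : isPEO Fs) (h : WangStep PQ PQ')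
    (hsub : subG PQ.1 Fs) : subG PQ'.1 Fs := by
  have hcl := subG_iff_pairwise.1 hsub
  rw [subG_iff_pairwise]
  obtain ⟨k, T, hT, ⟨R, I, -, hRsupp, -, hP', -⟩ | ⟨I, R', hI, hR', hP', -⟩⟩ := h
  · rw [hP']
    rintro F ((hF | rfl) | hF)
    · exact hcl F hF.1
    · exact hcl F hT.1
    · refine (pairwise_adjG_ssupp_levelSet hpeo hsub k).mono fun p hp => hRsupp ?_
      exact Set.mem_iUnion₂.2 ⟨F, hF, hp⟩
  · rw [hP']
    rintro F (hF | rfl | rfl)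
    · exact hcl F hF.1
    · exact (hcl T hT.1).mono hI
    · exact (hcl T hT.1).mono hR'

lemma finite_and_subG_of_reflTransGen_wangStep {Fs : Set (MvPolynomial (Fin n) K)}
    (hpeo : isPEO Fs) (h : Relation.ReflTransGen WangStep PQ PQ') (hP : PQ.1.Finite)
    (hsub : subG PQ.1 Fs) : PQ'.1.Finite ∧ subG PQ'.1 Fs := by
  induction h with
  | refl => exact ⟨hP, hsub⟩
  | tail _ hstep ih => exact ⟨hstep.finite ih.1, hstep.subG hpeo ih.2⟩

end WangStep

lemma hasLv_iff_max_eq {F : MvPolynomial (Fin n) K} {k : Fin n} :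
    hasLv F k ↔ F.vars.max = k := by
  constructor
  · rintro ⟨hk, hle⟩
    exact le_antisymm (Finset.max_le fun j hj => WithBot.coe_le_coe.2 (hle j hj))
      (Finset.le_max hk)
  · intro h
    exact ⟨Finset.mem_of_max h, fun j hj => Finset.le_max_of_eq hj h⟩

lemma exists_hasLv {F : MvPolynomial (Fin n) K} (h : (psupp F).Nonempty) : ∃ k, hasLv F k :=
  ⟨_, hasLv_iff_max_eq.2 (Finset.coe_max' (Finset.coe_nonempty.1 h)).symm⟩

lemma List.exists_pairwise_lt_of_injOn {α β : Type*} [LinearOrder β] (S : Finset α)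
    (f : α → β) (hf : Set.InjOn f S) :
    ∃ L : List α, (∀ a, a ∈ L ↔ a ∈ S) ∧ L.Pairwise fun a b => f a < f b := by
  let L := S.toList.mergeSort fun a b => decide (f a ≤ f b)
  have hperm : L.Perm S.toList := List.mergeSort_perm _ _
  have hmem : ∀ a, a ∈ L ↔ a ∈ S := fun a => hperm.mem_iff.trans S.mem_toList
  have hle : L.Pairwise fun a b => f a ≤ f b := by
    simpa using List.pairwise_mergeSort (le := fun a b => decide (f a ≤ f b))
      (fun _ _ _ hab hbc => by simpa using (of_decide_eq_true hab).trans (of_decide_eq_true hbc))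
      (fun a b => by simpa using le_total (f a) (f b)) S.toList
  refine ⟨L, hmem, (hle.and (hperm.nodup_iff.2 S.nodup_toList)).imp_of_mem ?_⟩
  intro a b ha hb ⟨hab, hne⟩
  exact hab.lt_of_ne fun h => hne (hf ((hmem a).1 ha) ((hmem b).1 hb) h)

lemma exists_isTriangularSet {S : Finset (MvPolynomial (Fin n) K)}
    (hnc : ∀ G ∈ S, (psupp G).Nonempty)
    (hdist : ∀ G ∈ S, ∀ H ∈ S, G ≠ H → ∀ a b : Fin n, hasLv G a → hasLv H b → a ≠ b) :
    ∃ L : List (MvPolynomial (Fin n) K), (∀ G, G ∈ L ↔ G ∈ S) ∧ IsTriangularSet L := by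
  have hinj : Set.InjOn (fun G : MvPolynomial (Fin n) K => G.vars.max) S := by
    intro G hG H hH hGH
    by_contra hne
    obtain ⟨a, ha⟩ := exists_hasLv (hnc G hG)
    refine hdist G hG H hH hne a a ha ?_ rfl
    exact hasLv_iff_max_eq.2 (hGH.symm.trans (hasLv_iff_max_eq.1 ha))
  obtain ⟨L, hL, hlt⟩ := List.exists_pairwise_lt_of_injOn S _ hinj
  refine ⟨L, hL, fun G hG => hnc G ((hL G).1 hG), (hlt.imp_of_mem ?_).isChain⟩
  intro G H hG hH hGH
  obtain ⟨a, ha⟩ := exists_hasLv (hnc G ((hL G).1 hG))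
  obtain ⟨b, hb⟩ := exists_hasLv (hnc H ((hL H).1 hH))
  refine ⟨a, b, ha, hb, ?_⟩
  rwa [hasLv_iff_max_eq.1 ha, hasLv_iff_max_eq.1 hb, WithBot.coe_lt_coe] at hGH

/-- let `Fs` be a finite chordal polynomial set whose natural variable
ordering is a perfect elimination ordering, and let `(P, Q)` be obtained from
`(Fs, ∅)` by finitely many Wang steps.  If the nonzero elements of `P` are
nonconstant with pairwise distinct leading variables, then they form, ordered by
leading variable, a triangular set `L` with `G(L) ⊆ G(Fs)`. -/
theorem statement9 {K : Type*} [Field K] {n : ℕ}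
    (Fs : Set (MvPolynomial (Fin n) K)) (hFfin : Fs.Finite) (hpeo : isPEO Fs)
    (P Q : Set (MvPolynomial (Fin n) K))
    (h : Relation.ReflTransGen WangStep (Fs, ∅) (P, Q))
    (hnc : ∀ G ∈ P, G ≠ 0 → (psupp G).Nonempty)
    (hdist : ∀ G ∈ P, ∀ H ∈ P, G ≠ 0 → H ≠ 0 → G ≠ H →
      ∀ a b : Fin n, hasLv G a → hasLv H b → a ≠ b) :
    ∃ L : List (MvPolynomial (Fin n) K),
      (∀ G, G ∈ L ↔ G ∈ P ∧ G ≠ 0) ∧ IsTriangularSet L ∧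
      subG {G | G ∈ L} Fs := by
  obtain ⟨hPfin, hsub⟩ :=
    finite_and_subG_of_reflTransGen_wangStep hpeo h hFfin (subG_of_subset subset_rfl)
  have hSfin : {G | G ∈ P ∧ G ≠ 0}.Finite := hPfin.subset fun _ hG => hG.1
  have hS : ∀ G, G ∈ hSfin.toFinset ↔ G ∈ P ∧ G ≠ 0 := fun _ => hSfin.mem_toFinset
  obtain ⟨L, hL, htri⟩ := exists_isTriangularSet (S := hSfin.toFinset)
    (fun G hG => hnc G ((hS G).1 hG).1 ((hS G).1 hG).2)
    (fun G hG H hH => hdist G ((hS G).1 hG).1 H ((hS H).1 hH).1 ((hS G).1 hG).2 ((hS H).1 hH).2)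
  refine ⟨L, fun G => (hL G).trans (hS G), htri, (subG_of_subset ?_).trans hsub⟩
  exact fun G hG => ((hS G).1 ((hL G).1 hG)).1
end

section
/- Let F be a finite chordal polynomial set in K[x_1,...,x_n] such that x_1 < ... < x_n is a perfect elimination ordering of G(F). Let P be a finite polynomial set with G(P) ⊆ G(F), let k be an index, and let T_1 and T_2 be two distinct polynomials in P^(k). Let H_2, ..., H_r be polynomials with supp(H_i) ⊆ supp(T_1) ∪ supp(T_2) for each i, and let I_2, ..., I_r be polynomials with supp(I_i) ⊆ supp(H_i) for each i. Define P_i = (P \ {T_1, T_2}) ∪ {H_i, I_{i+1}, ..., I_r} for i = 2, ..., r−1 and P_r = (P \ {T_1, T_2}) ∪ {H_r}. Then G(P_i) ⊆ G(F) for every i = 2, ..., r. -/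
open MvPolynomial

variable {K : Type*} [Field K] {n : ℕ}

/-!
Two polynomials `T₁, T₂ ∈ P^(k)` both contain `x_k`, and all their other variables are
smaller than `x_k` and adjacent to it in `G(P) ⊆ G(F)`. Since the ordering is a perfect
elimination ordering, `supp T₁ ∪ supp T₂` is therefore a clique of `G(F)`. Every new
polynomial `H_i`, `I_i` has its support inside this clique, and the remaining polynomials
of `P_i` come from `P`, so `G(P_i) ⊆ G(F)`.
-/

section

variable {Fs P : Set (MvPolynomial (Fin n) K)}

theorem adjG_of_mem_of_mem {F : MvPolynomial (Fin n) K} (hF : F ∈ P) (hPF : subG P Fs)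
    {p q : Fin n} (hpq : p ≠ q) (hp : p ∈ psupp F) (hq : q ∈ psupp F) : adjG Fs p q :=
  hPF p q ⟨hpq, F, hF, hp, hq⟩

theorem adjG_of_mem_levelSet (hpeo : isPEO Fs) (hPF : subG P Fs) {k : Fin n}
    {A B : MvPolynomial (Fin n) K} (hA : A ∈ levelSet P k) (hB : B ∈ levelSet P k)
    {p q : Fin n} (hpq : p ≠ q) (hp : p ∈ psupp A) (hq : q ∈ psupp B) : adjG Fs p q := by
  obtain ⟨hAP, hkA, hleA⟩ := hA
  obtain ⟨hBP, hkB, hleB⟩ := hB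
  by_cases hpk : p = k
  · exact adjG_of_mem_of_mem hBP hPF hpq (hpk ▸ hkB) hq
  by_cases hqk : q = k
  · exact adjG_of_mem_of_mem hAP hPF hpq hp (hqk ▸ hkA)
  exact hpeo p q k ((hleA p hp).lt_of_ne hpk) ((hleB q hq).lt_of_ne hqk) hpq
    (adjG_of_mem_of_mem hAP hPF hpk hp hkA) (adjG_of_mem_of_mem hBP hPF hqk hq hkB)

theorem adjG_of_mem_psupp_union (hpeo : isPEO Fs) (hPF : subG P Fs) {k : Fin n}
    {T₁ T₂ : MvPolynomial (Fin n) K} (hT₁ : T₁ ∈ levelSet P k) (hT₂ : T₂ ∈ levelSet P k)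
    {p q : Fin n} (hpq : p ≠ q) (hp : p ∈ psupp T₁ ∪ psupp T₂)
    (hq : q ∈ psupp T₁ ∪ psupp T₂) : adjG Fs p q := by
  rcases hp with hp | hp <;> rcases hq with hq | hq
  exacts [adjG_of_mem_levelSet hpeo hPF hT₁ hT₁ hpq hp hq,
    adjG_of_mem_levelSet hpeo hPF hT₁ hT₂ hpq hp hq,
    adjG_of_mem_levelSet hpeo hPF hT₂ hT₁ hpq hp hq,
    adjG_of_mem_levelSet hpeo hPF hT₂ hT₂ hpq hp hq]

theorem subG_of_forall_mem {Q : Set (MvPolynomial (Fin n) K)}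
    (hQ : ∀ F ∈ Q, ∀ p ∈ psupp F, ∀ q ∈ psupp F, p ≠ q → adjG Fs p q) : subG Q Fs := by
  rintro p q ⟨hpq, F, hF, hp, hq⟩
  exact hQ F hF p hp q hq hpq

end

theorem statement10_general {K : Type*} [Field K] {n : ℕ}
    (Fs : Set (MvPolynomial (Fin n) K)) (hpeo : isPEO Fs)
    (P : Set (MvPolynomial (Fin n) K)) (hPF : subG P Fs)
    (k : Fin n) (T₁ T₂ : MvPolynomial (Fin n) K)
    (hT₁ : T₁ ∈ levelSet P k) (hT₂ : T₂ ∈ levelSet P k)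
    (r : ℕ) (H I : ℕ → MvPolynomial (Fin n) K)
    (hH : ∀ i, 2 ≤ i → i ≤ r → psupp (H i) ⊆ psupp T₁ ∪ psupp T₂)
    (hI : ∀ i, 2 ≤ i → i ≤ r → psupp (I i) ⊆ psupp (H i)) :
    ∀ i, 2 ≤ i → i ≤ r →
      subG ((P \ {T₁, T₂}) ∪ {H i} ∪ (I '' {m | i < m ∧ m ≤ r})) Fs := by
  have hclique : ∀ F : MvPolynomial (Fin n) K, psupp F ⊆ psupp T₁ ∪ psupp T₂ →
      ∀ p ∈ psupp F, ∀ q ∈ psupp F, p ≠ q → adjG Fs p q :=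
    fun F hF p hp q hq hpq => adjG_of_mem_psupp_union hpeo hPF hT₁ hT₂ hpq (hF hp) (hF hq)
  intro i h2i hir
  refine subG_of_forall_mem ?_
  rintro F ((⟨hFP, -⟩ | rfl) | ⟨m, ⟨him, hmr⟩, rfl⟩)
  · exact fun p hp q hq hpq => adjG_of_mem_of_mem hFP hPF hpq hp hq
  · exact hclique _ (hH i h2i hir)
  · have h2m : 2 ≤ m := h2i.trans him.le
    exact hclique _ ((hI m h2m hmr).trans (hH m h2m hmr))

/-- let `Fs` be a finite chordal polynomial set whose natural variable
ordering is a perfect elimination ordering, `P` a finite polynomial set with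
`G(P) ⊆ G(Fs)`, and `T₁ ≠ T₂` two polynomials in `P^(k)`.  Given polynomials
`H_2, ..., H_r` with `supp (H i) ⊆ supp T₁ ∪ supp T₂` and `I_2, ..., I_r` with
`supp (I i) ⊆ supp (H i)`, set `P_i = (P \ {T₁, T₂}) ∪ {H i} ∪ {I_{i+1}, ..., I_r}`
for `2 ≤ i ≤ r` (so `P_r = (P \ {T₁, T₂}) ∪ {H r}`).  Then `G(P_i) ⊆ G(Fs)` for
every `i = 2, ..., r`. -/
theorem statement10 {K : Type*} [Field K] {n : ℕ}
    (Fs : Set (MvPolynomial (Fin n) K)) (hFfin : Fs.Finite) (hpeo : isPEO Fs)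
    (P : Set (MvPolynomial (Fin n) K)) (hPfin : P.Finite) (hPF : subG P Fs)
    (k : Fin n) (T₁ T₂ : MvPolynomial (Fin n) K) (hne : T₁ ≠ T₂)
    (hT₁ : T₁ ∈ levelSet P k) (hT₂ : T₂ ∈ levelSet P k)
    (r : ℕ) (hr : 2 ≤ r) (H I : ℕ → MvPolynomial (Fin n) K)
    (hH : ∀ i, 2 ≤ i → i ≤ r → psupp (H i) ⊆ psupp T₁ ∪ psupp T₂)
    (hI : ∀ i, 2 ≤ i → i ≤ r → psupp (I i) ⊆ psupp (H i)) :
    ∀ i, 2 ≤ i → i ≤ r →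
      subG ((P \ {T₁, T₂}) ∪ {H i} ∪ (I '' {m | i < m ∧ m ≤ r})) Fs :=
  statement10_general Fs hpeo P hPF k T₁ T₂ hT₁ hT₂ r H I hH hI
end

section
/- Let F be a finite chordal polynomial set in K[x_1,...,x_n] such that x_1 < ... < x_n is a perfect elimination ordering of G(F). Then every pair (P, Q) of finite polynomial sets obtained from the pair (F, ∅) by finitely many subresultant-based steps satisfies G(P) ⊆ G(F) and G(Q) ⊆ G(F). -/
open MvPolynomial

variable {K : Type*} [Field K] {n : ℕ}

/-- A subresultant-based step: transform a pair `(P, Q)` of polynomial sets by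
choosing `k` with `P^(k) ≠ ∅`, and either (right branch) choosing `T ∈ P^(k)` and
polynomials `I, R'` supported in `supp T` and passing to `((P \ {T}) ∪ {I, R'}, Q)`;
or (subresultant branch) choosing distinct `T₁, T₂ ∈ P^(k)`, polynomials
`H_2, ..., H_r` with `supp (H m) ⊆ supp T₁ ∪ supp T₂`, polynomials `I_2, ..., I_r`
with `supp (I m) ⊆ supp (H m)`, a polynomial `J` with `supp J ⊆ supp T₂`, and
`2 ≤ i ≤ r`, and passing to
`((P \ {T₁, T₂}) ∪ {H i, I_{i+1}, ..., I_r}, Q ∪ {J, I i})`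
(which for `i = r` is `((P \ {T₁, T₂}) ∪ {H r}, Q ∪ {J, I r})`). -/
def SubresStep (PQ PQ' :
    Set (MvPolynomial (Fin n) K) × Set (MvPolynomial (Fin n) K)) : Prop :=
  ∃ k : Fin n,
    (∃ T ∈ levelSet PQ.1 k, ∃ I R' : MvPolynomial (Fin n) K,
        psupp I ⊆ psupp T ∧ psupp R' ⊆ psupp T ∧
        PQ'.1 = (PQ.1 \ {T}) ∪ {I, R'} ∧ PQ'.2 = PQ.2) ∨
    (∃ T₁ T₂ : MvPolynomial (Fin n) K, T₁ ≠ T₂ ∧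
        T₁ ∈ levelSet PQ.1 k ∧ T₂ ∈ levelSet PQ.1 k ∧
      ∃ (r : ℕ) (H I : ℕ → MvPolynomial (Fin n) K) (J : MvPolynomial (Fin n) K)
          (i : ℕ), 2 ≤ i ∧ i ≤ r ∧
        (∀ m, 2 ≤ m → m ≤ r → psupp (H m) ⊆ psupp T₁ ∪ psupp T₂) ∧
        (∀ m, 2 ≤ m → m ≤ r → psupp (I m) ⊆ psupp (H m)) ∧
        psupp J ⊆ psupp T₂ ∧
        PQ'.1 = (PQ.1 \ {T₁, T₂}) ∪ {H i} ∪ (I '' {m | i < m ∧ m ≤ r}) ∧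
        PQ'.2 = PQ.2 ∪ {J, I i})

/-!
`G(P) ⊆ G(F)` means that the support of every polynomial of `P` is a clique of `G(F)`.
Every polynomial produced by a step is supported in `supp T` for some `T ∈ P`, or in
`supp T₁ ∪ supp T₂` for `T₁, T₂ ∈ P` with the same leading variable `x_k`. The latter is
again a clique of `G(F)` because the ordering is a perfect elimination ordering: variables
`x_p ∈ supp T₁` and `x_q ∈ supp T₂` below `x_k` are both adjacent to `x_k`, hence to each
other.
-/

def assocGraph (P : Set (MvPolynomial (Fin n) K)) : SimpleGraph (Fin n) where
  Adj := adjG P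
  symm := ⟨fun _ _ h => ⟨h.1.symm, h.2.imp fun _ hF => ⟨hF.1, hF.2.2, hF.2.1⟩⟩⟩
  loopless := ⟨fun _ h => h.1 rfl⟩

theorem assocGraph_adj {P : Set (MvPolynomial (Fin n) K)} {p q : Fin n} :
    (assocGraph P).Adj p q ↔ adjG P p q := Iff.rfl

theorem subG_iff_forall_isClique {P Fs : Set (MvPolynomial (Fin n) K)} :
    subG P Fs ↔ ∀ F ∈ P, (assocGraph Fs).IsClique (psupp F) :=
  ⟨fun h F hF _ hp _ hq hpq => assocGraph_adj.2 (h _ _ ⟨hpq, F, hF, hp, hq⟩),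
    fun h _ _ ⟨hpq, F, hF, hp, hq⟩ => assocGraph_adj.1 (h F hF hp hq hpq)⟩

theorem subG_self (P : Set (MvPolynomial (Fin n) K)) : subG P P := fun _ _ => id

theorem subG_empty (P : Set (MvPolynomial (Fin n) K)) : subG ∅ P :=
  fun _ _ ⟨_, _, hF, _⟩ => hF.elim

theorem isPEO.isClique_union {Fs : Set (MvPolynomial (Fin n) K)} (hpeo : isPEO Fs)
    {S₁ S₂ : Set (Fin n)} {k : Fin n}
    (h₁ : (assocGraph Fs).IsClique S₁) (h₂ : (assocGraph Fs).IsClique S₂)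
    (hk₁ : k ∈ S₁) (hk₂ : k ∈ S₂) (hle₁ : ∀ j ∈ S₁, j ≤ k) (hle₂ : ∀ j ∈ S₂, j ≤ k) :
    (assocGraph Fs).IsClique (S₁ ∪ S₂) := by
  have mixed : ∀ p ∈ S₁, ∀ q ∈ S₂, p ≠ q → (assocGraph Fs).Adj p q := by
    intro p hp q hq hpq
    rcases (hle₁ p hp).eq_or_lt with rfl | hpk
    · exact h₂ hk₂ hq hpq
    rcases (hle₂ q hq).eq_or_lt with rfl | hqk
    · exact h₁ hp hk₁ hpq
    exact hpeo p q k hpk hqk hpq (h₁ hp hk₁ hpk.ne) (h₂ hq hk₂ hqk.ne)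
  exact Set.pairwise_union.2
    ⟨h₁, h₂, fun p hp q hq hpq => ⟨mixed p hp q hq hpq, (mixed p hp q hq hpq).symm⟩⟩

theorem isPEO.subG_of_subresStep {Fs : Set (MvPolynomial (Fin n) K)} (hpeo : isPEO Fs)
    {c d : Set (MvPolynomial (Fin n) K) × Set (MvPolynomial (Fin n) K)}
    (hstep : SubresStep c d) (hc : subG c.1 Fs ∧ subG c.2 Fs) :
    subG d.1 Fs ∧ subG d.2 Fs := by
  simp only [subG_iff_forall_isClique] at hc ⊢
  obtain ⟨hP, hQ⟩ := hc
  obtain ⟨k, ⟨T, hT, I, R', hI, hR', hP', hQ'⟩ |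
    ⟨T₁, T₂, -, h₁, h₂, r, H, I, J, i, hi, hir, hH, hIH, hJ, hP', hQ'⟩⟩ := hstep
  · rw [hP', hQ']
    refine ⟨?_, hQ⟩
    rintro F (⟨hF, -⟩ | rfl | rfl)
    · exact hP F hF
    · exact (hP T hT.1).subset hI
    · exact (hP T hT.1).subset hR'
  · have hU := hpeo.isClique_union (hP T₁ h₁.1) (hP T₂ h₂.1) h₁.2.1 h₂.2.1 h₁.2.2 h₂.2.2
    rw [hP', hQ']
    constructor
    · rintro F ((⟨hF, -⟩ | rfl) | ⟨m, ⟨him, hmr⟩, rfl⟩)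
      · exact hP F hF
      · exact hU.subset (hH i hi hir)
      · exact hU.subset ((hIH m (hi.trans him.le) hmr).trans (hH m (hi.trans him.le) hmr))
    · rintro F (hF | rfl | rfl)
      · exact hQ F hF
      · exact hU.subset (hJ.trans Set.subset_union_right)
      · exact hU.subset ((hIH i hi hir).trans (hH i hi hir))

theorem isPEO.subG_of_reflTransGen {Fs : Set (MvPolynomial (Fin n) K)} (hpeo : isPEO Fs)
    {c d : Set (MvPolynomial (Fin n) K) × Set (MvPolynomial (Fin n) K)}
    (h : Relation.ReflTransGen SubresStep c d) (hc : subG c.1 Fs ∧ subG c.2 Fs) :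
    subG d.1 Fs ∧ subG d.2 Fs := by
  induction h with
  | refl => exact hc
  | tail _ hstep ih => exact hpeo.subG_of_subresStep hstep ih

theorem statement11_general {K : Type*} [Field K] {n : ℕ}
    (Fs : Set (MvPolynomial (Fin n) K)) (hpeo : isPEO Fs)
    (P Q : Set (MvPolynomial (Fin n) K))
    (h : Relation.ReflTransGen SubresStep (Fs, ∅) (P, Q)) :
    subG P Fs ∧ subG Q Fs :=
  hpeo.subG_of_reflTransGen h ⟨subG_self Fs, subG_empty Fs⟩

/-- let `Fs` be a finite chordal polynomial set whose natural variable
ordering is a perfect elimination ordering.  Then every pair `(P, Q)` obtained from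
`(Fs, ∅)` by finitely many subresultant-based steps satisfies `G(P) ⊆ G(Fs)` and
`G(Q) ⊆ G(Fs)`. -/
theorem statement11 {K : Type*} [Field K] {n : ℕ}
    (Fs : Set (MvPolynomial (Fin n) K)) (hFfin : Fs.Finite) (hpeo : isPEO Fs)
    (P Q : Set (MvPolynomial (Fin n) K))
    (h : Relation.ReflTransGen SubresStep (Fs, ∅) (P, Q)) :
    subG P Fs ∧ subG Q Fs :=
  statement11_general Fs hpeo P Q h
end
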